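/- For all natural numbers p and a with p ≥ 2a, H(p + 1, a) = H(p, a). In other words, for fixed a the sequence p ↦ H(p, a) is constant for p ≥ 2a. -/

import Mathlib

/-- The number of covering pairs (arcs of the Hasse diagram) of a partial order `P`. -/
noncomputable def nCovers {α : Type*} (P : PartialOrder α) : ℕ :=
  letI := P
  Nat.card {q : α × α // q.1 ⋖ q.2}

/-- `P` has no isolated points: every element belongs to some covering pair. -/
def NoIsolated {α : Type*} (P : PartialOrder α) : Prop :=
  letI := P
  ∀ x : α, ∃ y, x ⋖ y ∨ y ⋖ x

/-- Two partial orders on `Fin p` are equivalent iff they are order-isomorphic. -/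
def posetIsoSetoid (p : ℕ) : Setoid (PartialOrder (Fin p)) where
  r P Q := Nonempty (@OrderIso (Fin p) (Fin p) P.toPreorder.toLE Q.toPreorder.toLE)
  iseqv := by
    refine ⟨fun P => ⟨@OrderIso.refl _ P.toPreorder.toLE⟩, ?_, ?_⟩
    · rintro P Q ⟨e⟩
      exact ⟨@OrderIso.symm _ _ P.toPreorder.toLE Q.toPreorder.toLE e⟩
    · rintro P Q R ⟨e⟩ ⟨f⟩
      exact ⟨@OrderIso.trans _ _ _ P.toPreorder.toLE Q.toPreorder.toLE R.toPreorder.toLE e f⟩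

/-- `H p a`: the number of isomorphism classes of partial orders on `Fin p`
with exactly `a` covering pairs. -/
noncomputable def H (p a : ℕ) : ℕ :=
  Nat.card (Quotient ((posetIsoSetoid p).comap
    (Subtype.val : {P : PartialOrder (Fin p) // nCovers P = a} → PartialOrder (Fin p))))

/-- `H0 p a`: the number of isomorphism classes of partial orders on `Fin p`
with exactly `a` covering pairs and no isolated point. -/
noncomputable def H0 (p a : ℕ) : ℕ :=
  Nat.card (Quotient ((posetIsoSetoid p).comap
    (Subtype.val : {P : PartialOrder (Fin p) // nCovers P = a ∧ NoIsolated P} →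
      PartialOrder (Fin p))))

section MyAux
variable {α β : Type*}

/-- Order isomorphism between two explicit partial orders. -/
abbrev OIso (P : PartialOrder α) (Q : PartialOrder β) :=
  @OrderIso α β P.toPreorder.toLE Q.toPreorder.toLE

def oTrans {α β γ : Type*} {P : PartialOrder α} {Q : PartialOrder β} {R : PartialOrder γ}
    (e : OIso P Q) (f : OIso Q R) : OIso P R :=
  @OrderIso.trans α β γ P.toPreorder.toLE Q.toPreorder.toLE R.toPreorder.toLE e f

def oSymm {α β : Type*} {P : PartialOrder α} {Q : PartialOrder β} (e : OIso P Q) : OIso Q P :=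
  @OrderIso.symm α β P.toPreorder.toLE Q.toPreorder.toLE e

lemma nCovers_congr (P : PartialOrder α) (Q : PartialOrder β)
    (e : OIso P Q) : nCovers P = nCovers Q := by
  letI := P; letI := Q
  exact Nat.card_congr
    { toFun := fun q => ⟨(e q.1.1, e q.1.2), (apply_covBy_apply_iff e).2 q.2⟩
      invFun := fun q => ⟨(e.symm q.1.1, e.symm q.1.2), (apply_covBy_apply_iff e.symm).2 q.2⟩
      left_inv := fun q => by
        apply Subtype.ext
        simp [Prod.ext_iff]
      right_inv := fun q => by
        apply Subtype.ext
        simp [Prod.ext_iff] }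

def pTransport (e : α ≃ β) (P : PartialOrder α) : PartialOrder β :=
  @PartialOrder.lift β α P e.symm e.symm.injective

def pTransportIso (e : α ≃ β) (P : PartialOrder α) :
    OIso P (pTransport e P) :=
  letI := P
  { e with
    map_rel_iff' := @fun a b => by
      show P.le (e.symm (e a)) (e.symm (e b)) ↔ P.le a b
      rw [e.symm_apply_apply, e.symm_apply_apply] }

lemma nCovers_pTransport (e : α ≃ β) (P : PartialOrder α) :
    nCovers (pTransport e P) = nCovers P :=
  (nCovers_congr _ _ (pTransportIso e P)).symm

def optionLE (P : PartialOrder α) (x y : Option α) : Prop :=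
  match x, y with
  | some a, some b => P.le a b
  | none, none => True
  | _, _ => False

def optionPoset (P : PartialOrder α) : PartialOrder (Option α) where
  le := optionLE P
  lt x y := optionLE P x y ∧ ¬ optionLE P y x
  lt_iff_le_not_ge _ _ := Iff.rfl
  le_refl x := by
    cases x with
    | none => trivial
    | some a => exact P.le_refl a
  le_trans x y z hxy hyz := by
    cases x <;> cases y <;> cases z <;>
      first
        | trivial
        | exact (hxy : False).elim
        | exact (hyz : False).elim
        | exact P.le_trans _ _ _ hxy hyz
  le_antisymm x y hxy hyx := by
    cases x <;> cases y <;>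
      first
        | rfl
        | exact (hxy : False).elim
        | exact (hyx : False).elim
        | exact congrArg some (P.le_antisymm _ _ hxy hyx)

lemma optionPoset_le (P : PartialOrder α) : (optionPoset P).le = optionLE P := rfl

section OptionLemmas
variable (P : PartialOrder α)

lemma optionPoset_lt_some_some {a b : α} :
    (optionPoset P).lt (some a) (some b) ↔ P.lt a b := by
  constructor
  · rintro ⟨h1, h2⟩
    exact (P.toPreorder.lt_iff_le_not_ge a b).2 ⟨h1, h2⟩
  · intro h
    obtain ⟨h1, h2⟩ := (P.toPreorder.lt_iff_le_not_ge a b).1 h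
    exact ⟨h1, h2⟩

lemma optionPoset_not_lt_none (x : Option α) : ¬ (optionPoset P).lt x none := by
  rintro ⟨h1, h2⟩
  cases x with
  | none => exact h2 h1
  | some a => exact (h1 : False)

lemma optionPoset_not_none_lt (x : Option α) : ¬ (optionPoset P).lt none x := by
  rintro ⟨h1, h2⟩
  cases x with
  | none => exact h2 h1
  | some a => exact (h1 : False)

lemma optionPoset_covBy_iff {a b : α} :
    @CovBy (Option α) (optionPoset P).toLT (some a) (some b) ↔ @CovBy α P.toLT a b := by
  constructor
  · intro h
    refine ⟨(optionPoset_lt_some_some P).1 h.1, fun c hac hcb => ?_⟩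
    exact h.2 ((optionPoset_lt_some_some P).2 hac) ((optionPoset_lt_some_some P).2 hcb)
  · intro h
    refine ⟨(optionPoset_lt_some_some P).2 h.1, fun c h1 h2 => ?_⟩
    cases c with
    | none => exact optionPoset_not_lt_none P _ h1
    | some c => exact h.2 ((optionPoset_lt_some_some P).1 h1) ((optionPoset_lt_some_some P).1 h2)

lemma nCovers_optionPoset : nCovers (optionPoset P) = nCovers P := by
  unfold nCovers
  letI := P
  have E : {q : α × α // q.1 ⋖ q.2} ≃
      {q : Option α × Option α // @CovBy _ (optionPoset P).toLT q.1 q.2} := by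
    refine Equiv.ofBijective
      (fun q => ⟨(some q.1.1, some q.1.2), (optionPoset_covBy_iff P).2 q.2⟩) ⟨?_, ?_⟩
    · intro q q' hqq
      apply Subtype.ext
      have h1 := congrArg (fun z => z.1.1) hqq
      have h2 := congrArg (fun z => z.1.2) hqq
      simp only at h1 h2
      exact Prod.ext (Option.some_injective _ h1) (Option.some_injective _ h2)
    · rintro ⟨⟨x, y⟩, hxy⟩
      cases x with
      | none => exact absurd hxy.1 (optionPoset_not_none_lt P _)
      | some a =>
        cases y with
        | none => exact absurd hxy.1 (optionPoset_not_lt_none P _)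
        | some b => exact ⟨⟨(a, b), (optionPoset_covBy_iff P).1 hxy⟩, rfl⟩
  exact (Nat.card_congr E).symm

end OptionLemmas

def IsolatedPt (P : PartialOrder α) (x : α) : Prop :=
  (∀ y, P.le x y → x = y) ∧ (∀ y, P.le y x → y = x)

lemma isolatedPt_none (P : PartialOrder α) : IsolatedPt (optionPoset P) none := by
  constructor
  · intro y hy
    rw [optionPoset_le] at hy
    cases y with
    | none => rfl
    | some a => exact (hy : False).elim
  · intro y hy
    rw [optionPoset_le] at hy
    cases y with
    | none => rfl
    | some a => exact (hy : False).elim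

lemma isolatedPt_map (P : PartialOrder α) (Q : PartialOrder β) (e : OIso P Q) {x : α}
    (hx : IsolatedPt P x) : IsolatedPt Q (e x) := by
  letI := P; letI := Q
  constructor
  · intro y hy
    have h1 : P.le x (e.symm y) := by
      have h2 : Q.le (e x) (e (e.symm y)) := by rwa [e.apply_symm_apply]
      exact e.map_rel_iff.1 h2
    rw [hx.1 _ h1, e.apply_symm_apply]
  · intro y hy
    have h1 : P.le (e.symm y) x := by
      have h2 : Q.le (e (e.symm y)) (e x) := by rwa [e.apply_symm_apply]
      exact e.map_rel_iff.1 h2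
    rw [← hx.2 _ h1, e.apply_symm_apply]

noncomputable def swapIso (P : PartialOrder α) {x y : α} (hx : IsolatedPt P x)
    (hy : IsolatedPt P y) : OIso P P :=
  letI := P
  haveI : DecidableEq α := Classical.decEq α
  have key : ∀ a b : α, P.le a b → P.le (Equiv.swap x y a) (Equiv.swap x y b) := by
    intro a b hab
    rcases eq_or_ne a b with rfl | hne
    · exact P.le_refl _
    · have hax : a ≠ x := fun h => hne ((h ▸ hx).1 b hab)
      have hay : a ≠ y := fun h => hne ((h ▸ hy).1 b hab)
      have hbx : b ≠ x := fun h => hne ((hx.2 a (h ▸ hab)).trans h.symm)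
      have hby : b ≠ y := fun h => hne ((hy.2 a (h ▸ hab)).trans h.symm)
      rwa [Equiv.swap_apply_of_ne_of_ne hax hay, Equiv.swap_apply_of_ne_of_ne hbx hby]
  { Equiv.swap x y with
    map_rel_iff' := @fun a b => by
      constructor
      · intro hab
        have := key _ _ hab
        rwa [Equiv.swap_apply_self, Equiv.swap_apply_self] at this
      · exact key a b }

def optionIso (P : PartialOrder α) (Q : PartialOrder β) (e : OIso P Q) :
    OIso (optionPoset P) (optionPoset Q) :=
  { Equiv.optionCongr e.toEquiv with
    map_rel_iff' := @fun a b => by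
      show (optionPoset Q).le _ _ ↔ (optionPoset P).le _ _
      rw [optionPoset_le, optionPoset_le]
      cases a <;> cases b
      · exact Iff.rfl
      · exact Iff.rfl
      · exact Iff.rfl
      · exact e.map_rel_iff }

def someRestrict (R : PartialOrder (Option α)) : PartialOrder α :=
  @PartialOrder.lift α (Option α) R some (Option.some_injective α)

lemma eq_optionPoset_of_isolated_none (R : PartialOrder (Option α))
    (h : IsolatedPt R none) : R = optionPoset (someRestrict R) := by
  refine PartialOrder.ext ?_
  intro x y
  show R.le x y ↔ (optionPoset (someRestrict R)).le x y
  rw [optionPoset_le]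
  cases x <;> cases y
  · exact iff_of_true (R.le_refl _) trivial
  · exact iff_of_false (fun hle => nomatch (h.1 _ hle)) (fun hle => hle)
  · exact iff_of_false (fun hle => nomatch (h.2 _ hle)) (fun hle => hle)
  · exact Iff.rfl

lemma cancel_option (P : PartialOrder α) (Q : PartialOrder β)
    (e : OIso (optionPoset P) (optionPoset Q)) : Nonempty (OIso P Q) := by
  letI := P; letI := Q
  have hiso : IsolatedPt (optionPoset Q) (e none) := isolatedPt_map _ _ e (isolatedPt_none P)
  classical
  let s : OIso (optionPoset Q) (optionPoset Q) := swapIso _ hiso (isolatedPt_none Q)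
  let f : OIso (optionPoset P) (optionPoset Q) := oTrans e s
  have hf : f.toEquiv none = none := by
    show (swapIso (optionPoset Q) hiso (isolatedPt_none Q)).toEquiv (e.toEquiv none) = none
    rw [show e.toEquiv none = e none from rfl]
    simp only [swapIso]
    exact @Equiv.swap_apply_left _ (Classical.decEq _) _ _
  have hsome : ∀ x : α, ∃ b, f.toEquiv (some x) = some b := by
    intro x
    rcases hb : f.toEquiv (some x) with _ | b
    · exact absurd (f.toEquiv.injective (hb.trans hf.symm)) (by simp)
    · exact ⟨b, rfl⟩
  let g : α ≃ β := Equiv.removeNone f.toEquiv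
  have hg : ∀ x : α, f.toEquiv (some x) = some (g x) := fun x =>
    (Equiv.removeNone_some f.toEquiv (hsome x)).symm
  refine ⟨{ g with map_rel_iff' := @fun x y => ?_ }⟩
  have h2 := f.map_rel_iff' (a := some x) (b := some y)
  show Q.le (g x) (g y) ↔ P.le x y
  have h3 : (optionPoset Q).le (f.toEquiv (some x)) (f.toEquiv (some y)) ↔
      (optionPoset P).le (some x) (some y) := h2
  rw [hg x, hg y, optionPoset_le, optionPoset_le] at h3
  exact h3

lemma exists_isolated {n a : ℕ} (Q : PartialOrder (Fin n)) (hQ : nCovers Q = a)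
    (h : 2 * a < n) : ∃ z, IsolatedPt Q z := by
  letI := Q
  by_contra hc
  push_neg at hc
  haveI : LocallyFiniteOrder (Fin n) := by
    classical exact Fintype.toLocallyFiniteOrder
  have hcov : ∀ z : Fin n, ∃ y, @CovBy _ Q.toLT z y ∨ @CovBy _ Q.toLT y z := by
    intro z
    rcases not_and_or.mp (hc z) with hz | hz
    · push_neg at hz
      obtain ⟨y, hle, hne⟩ := hz
      obtain ⟨w, hw, -⟩ := exists_covBy_le_of_lt (lt_of_le_of_ne hle hne)
      exact ⟨w, Or.inl hw⟩
    · push_neg at hz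
      obtain ⟨y, hle, hne⟩ := hz
      obtain ⟨w, -, hw⟩ := exists_le_covBy_of_lt (lt_of_le_of_ne hle hne)
      exact ⟨w, Or.inr hw⟩
  choose g hg using hcov
  classical
  let f : Fin n → {q : Fin n × Fin n // @CovBy _ Q.toLT q.1 q.2} × Bool := fun x =>
    if hxy : @CovBy _ Q.toLT x (g x) then (⟨(x, g x), hxy⟩, true)
    else (⟨(g x, x), (hg x).resolve_left hxy⟩, false)
  have hfinj : Function.Injective f := by
    intro x x' hxx
    by_cases h1 : @CovBy _ Q.toLT x (g x) <;> by_cases h2 : @CovBy _ Q.toLT x' (g x')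
    · simp only [f, dif_pos h1, dif_pos h2, Prod.mk.injEq, Subtype.mk.injEq] at hxx
      exact hxx.1.1
    · simp only [f, dif_pos h1, dif_neg h2, Prod.mk.injEq] at hxx
      exact absurd hxx.2 (by simp)
    · simp only [f, dif_neg h1, dif_pos h2, Prod.mk.injEq] at hxx
      exact absurd hxx.2 (by simp)
    · simp only [f, dif_neg h1, dif_neg h2, Prod.mk.injEq, Subtype.mk.injEq] at hxx
      exact hxx.1.2
  have hcard := Nat.card_le_card_of_injective f hfinj
  rw [Nat.card_prod] at hcard
  have e1 : Nat.card (Fin n) = n := by simp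
  have e2 : Nat.card Bool = 2 := by simp [Nat.card_eq_fintype_card]
  have e3 : Nat.card {q : Fin n × Fin n // @CovBy _ Q.toLT q.1 q.2} = a := hQ
  rw [e1, e2, e3] at hcard
  omega

end MyAux

/-- For `p ≥ 2a`, the value `H p a` no longer changes when `p` increases. -/
theorem H_stable (p a : ℕ) (h : 2 * a ≤ p) : H (p + 1) a = H p a := by
  classical
  let F : {P : PartialOrder (Fin p) // nCovers P = a} →
      {P : PartialOrder (Fin (p + 1)) // nCovers P = a} :=
    fun P => ⟨pTransport (finSuccEquiv p).symm (optionPoset P.1), by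
      rw [nCovers_pTransport, nCovers_optionPoset, P.2]⟩
  have wd : ∀ P Q : {P : PartialOrder (Fin p) // nCovers P = a},
      ((posetIsoSetoid p).comap Subtype.val).r P Q →
      ((posetIsoSetoid (p + 1)).comap Subtype.val).r (F P) (F Q) := by
    rintro P Q ⟨e⟩
    exact ⟨oTrans (oTrans (oSymm (pTransportIso (finSuccEquiv p).symm (optionPoset P.1)))
      (optionIso _ _ e)) (pTransportIso (finSuccEquiv p).symm (optionPoset Q.1))⟩
  have hinj : Function.Injective (Quotient.map' F wd) := by
    intro q1 q2
    refine Quotient.inductionOn₂' q1 q2 ?_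
    intro P Q hPQ
    rw [Quotient.map'_mk'', Quotient.map'_mk''] at hPQ
    obtain ⟨e⟩ := Quotient.eq''.mp hPQ
    have e2 : OIso (optionPoset P.1) (optionPoset Q.1) :=
      oTrans (oTrans (pTransportIso (finSuccEquiv p).symm (optionPoset P.1)) e)
        (oSymm (pTransportIso (finSuccEquiv p).symm (optionPoset Q.1)))
    obtain ⟨e3⟩ := cancel_option _ _ e2
    exact Quotient.sound' ⟨e3⟩
  have hsurj : Function.Surjective (Quotient.map' F wd) := by
    intro q
    refine Quotient.inductionOn' q ?_
    rintro ⟨Q, hQ⟩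
    obtain ⟨z, hz⟩ := exists_isolated Q hQ (by omega)
    set R := pTransport (finSuccEquiv' z) Q with hRdef
    let e1 : OIso Q R := pTransportIso (finSuccEquiv' z) Q
    have hnone : IsolatedPt R none := by
      have h1 := isolatedPt_map _ _ e1 hz
      rwa [show (e1 z : Option (Fin p)) = none from by
        show (finSuccEquiv' z) z = none
        exact finSuccEquiv'_at z] at h1
    have hReq : R = optionPoset (someRestrict R) := eq_optionPoset_of_isolated_none R hnone
    have hcard : nCovers (someRestrict R) = a := by
      have h1 : nCovers R = a := by rw [hRdef, nCovers_pTransport]; exact hQ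
      rw [hReq, nCovers_optionPoset] at h1
      exact h1
    refine ⟨Quotient.mk'' ⟨someRestrict R, hcard⟩, ?_⟩
    rw [Quotient.map'_mk'']
    apply Quotient.sound'
    have i2 : OIso (optionPoset (someRestrict R)) Q := by
      rw [← hReq]
      exact oSymm e1
    exact ⟨oTrans (oSymm (pTransportIso (finSuccEquiv p).symm (optionPoset (someRestrict R)))) i2⟩
  exact (Nat.card_eq_of_bijective _ ⟨hinj, hsurj⟩).symm
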